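/- Let A, B, P be strings and let 1≤i≤|A|, 1≤j≤|B|, 1≤k≤|P| with A[i]=B[j]=P[k]. Then C(i,j,k) = C(i−1,j−1,k−1) + 1 (with the convention −∞+1=−∞). -/

import Mathlib

open List Relation

section Defs

variable {V V1 V2 V3 α : Type*}

/-- A (directed) path: a nonempty list of vertices, consecutive ones joined by edges. -/
def IsPath (E : V → V → Prop) (p : List V) : Prop :=
  p ≠ [] ∧ p.Chain' E

/-- Paths ending at `v` (the set `P(v)`). -/
def EndsAt (E : V → V → Prop) (v : V) (p : List V) : Prop :=
  IsPath E p ∧ p.getLast? = some v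

/-- A path is left-maximal if its first vertex has no in-coming edges. -/
def LeftMax (E : V → V → Prop) (p : List V) : Prop :=
  ∀ w u, p.head? = some w → ¬ E u w

/-- A path is right-maximal if its last vertex has no out-going edges. -/
def RightMax (E : V → V → Prop) (p : List V) : Prop :=
  ∀ w u, p.getLast? = some w → ¬ E w u

/-- `Subseq(ℓ(P(v)))`: subsequences of label strings of paths ending at `v`. -/
def SubseqAt (E : V → V → Prop) (ℓ : V → α) (v : V) : Set (List α) :=
  {z | ∃ p, EndsAt E v p ∧ z.Sublist (p.map ℓ)}

/-- `Subseq(ℓ(LMP(v)))`: subsequences of label strings of left-maximal paths ending at `v`. -/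
def SubseqLM (E : V → V → Prop) (ℓ : V → α) (v : V) : Set (List α) :=
  {z | ∃ p, EndsAt E v p ∧ LeftMax E p ∧ z.Sublist (p.map ℓ)}

/-- `Subseq(G)`: subsequences of label strings of all paths of `G`. -/
def SubseqG (E : V → V → Prop) (ℓ : V → α) : Set (List α) :=
  {z | ∃ p, IsPath E p ∧ z.Sublist (p.map ℓ)}

/-- A graph is acyclic if no vertex lies on a nonempty cycle. -/
def Acyclic (E : V → V → Prop) : Prop :=
  ∀ v, ¬ Relation.TransGen E v v

/-- The set `S_IC(v1,v2,v3)`. -/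
def SIC (E1 : V1 → V1 → Prop) (ℓ1 : V1 → α) (E2 : V2 → V2 → Prop) (ℓ2 : V2 → α)
    (E3 : V3 → V3 → Prop) (ℓ3 : V3 → α) (v1 : V1) (v2 : V2) (v3 : V3) :
    Set (List α) :=
  {z | (∃ q, EndsAt E3 v3 q ∧ LeftMax E3 q ∧ (q.map ℓ3).Sublist z) ∧
       z ∈ SubseqAt E1 ℓ1 v1 ∧ z ∈ SubseqAt E2 ℓ2 v2}

/-- Maximum length of a string in `S`, with `⊥` (= −∞) for `S = ∅`. -/
noncomputable def maxLen (S : Set (List α)) : WithBot ℕ :=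
  sSup ((fun z : List α => (z.length : WithBot ℕ)) '' S)

/-- `L(v1,v2)`: the maximum length of a common subsequence (as a natural number). -/
noncomputable def Lval (E1 : V1 → V1 → Prop) (ℓ1 : V1 → α)
    (E2 : V2 → V2 → Prop) (ℓ2 : V2 → α) (v1 : V1) (v2 : V2) : ℕ :=
  sSup {n | ∃ z ∈ SubseqAt E1 ℓ1 v1 ∩ SubseqAt E2 ℓ2 v2, n = z.length}

/-- `D(v1,v2,v3)`: the maximum length of a string in `S_IC(v1,v2,v3)`, `−∞` if empty. -/
noncomputable def Dval (E1 : V1 → V1 → Prop) (ℓ1 : V1 → α) (E2 : V2 → V2 → Prop) (ℓ2 : V2 → α)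
    (E3 : V3 → V3 → Prop) (ℓ3 : V3 → α) (v1 : V1) (v2 : V2) (v3 : V3) : WithBot ℕ :=
  maxLen (SIC E1 ℓ1 E2 ℓ2 E3 ℓ3 v1 v2 v3)

end Defs

/-- `C(i,j,k)`: the maximum length (`⊥` = −∞ if none exists) of a string `z` such
that `P[1..k]` is a subsequence of `z` and `z` is a common subsequence of
`A[1..i]` and `B[1..j]`. -/
noncomputable def Cval {α : Type*} (A B P : List α) (i j k : ℕ) : WithBot ℕ :=
  maxLen {z | (P.take k).Sublist z ∧ z.Sublist (A.take i) ∧ z.Sublist (B.take j)}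

/-! Dropping the last letter preserves `<+`, so if `P ++ [c] <+ z` and `z` is a common
subsequence of `A ++ [c]` and `B ++ [c]`, then `z.dropLast` is admissible for `P, A, B`;
conversely `z' ↦ z' ++ [c]` maps admissible strings for `P, A, B` back. Hence the achievable
lengths at `(i, j, k)` are exactly those at `(i - 1, j - 1, k - 1)` shifted by one. -/

theorem List.Sublist.dropLast {α : Type*} {l₁ l₂ : List α} (h : l₁ <+ l₂) :
    l₁.dropLast <+ l₂.dropLast := by
  rw [← reverse_sublist, ← tail_reverse, ← tail_reverse]
  exact (reverse_sublist.mpr h).tail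

theorem List.take_eq_take_sub_one_append {α : Type*} (l : List α) {n : ℕ} (hn : 1 ≤ n)
    (h : n - 1 < l.length) : l.take n = l.take (n - 1) ++ [l.get ⟨n - 1, h⟩] := by
  obtain ⟨m, rfl⟩ : ∃ m, n = m + 1 := ⟨n - 1, by omega⟩
  exact take_succ_eq_append_getElem h

theorem WithBot.sSup_image_add_const {s : Set (WithBot ℕ)} (hs : s.Finite) (a : WithBot ℕ) :
    sSup ((· + a) '' s) = sSup s + a := by
  rcases s.eq_empty_or_nonempty with rfl | hne
  · simp
  · exact (hs.map_sSup_of_monotone (fun _ _ h => add_le_add_left h a) hne).symm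

section ConstrainedCommonSubseqs

variable {α : Type*}

def constrainedCommonSubseqs (P A B : List α) : Set (List α) :=
  {z | P <+ z ∧ z <+ A ∧ z <+ B}

theorem Cval_eq_maxLen (A B P : List α) (i j k : ℕ) :
    Cval A B P i j k =
      maxLen (constrainedCommonSubseqs (P.take k) (A.take i) (B.take j)) :=
  rfl

theorem constrainedCommonSubseqs_finite (P A B : List α) :
    (constrainedCommonSubseqs P A B).Finite :=
  A.sublists.finite_toSet.subset fun _ hz => mem_sublists.mpr hz.2.1

theorem dropLast_mem_constrainedCommonSubseqs {P A B z : List α} {c : α}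
    (hz : z ∈ constrainedCommonSubseqs (P ++ [c]) (A ++ [c]) (B ++ [c])) :
    z.dropLast ∈ constrainedCommonSubseqs P A B := by
  obtain ⟨hP, hA, hB⟩ := hz
  refine ⟨?_, ?_, ?_⟩
  · simpa using hP.dropLast
  · simpa using hA.dropLast
  · simpa using hB.dropLast

theorem concat_mem_constrainedCommonSubseqs {P A B z : List α} (c : α)
    (hz : z ∈ constrainedCommonSubseqs P A B) :
    z ++ [c] ∈ constrainedCommonSubseqs (P ++ [c]) (A ++ [c]) (B ++ [c]) := by
  obtain ⟨hP, hA, hB⟩ := hz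
  exact ⟨hP.append_right [c], hA.append (.refl [c]), hB.append (.refl [c])⟩

theorem length_image_constrainedCommonSubseqs_concat (P A B : List α) (c : α) :
    (fun z : List α => (z.length : WithBot ℕ)) ''
        constrainedCommonSubseqs (P ++ [c]) (A ++ [c]) (B ++ [c]) =
      (· + 1) '' ((fun z : List α => (z.length : WithBot ℕ)) ''
        constrainedCommonSubseqs P A B) := by
  ext n
  simp only [Set.mem_image, exists_exists_and_eq_and]
  constructor
  · rintro ⟨z, hz, rfl⟩
    have hpos : 0 < z.length := lt_of_lt_of_le (by simp) hz.1.length_le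
    refine ⟨z.dropLast, dropLast_mem_constrainedCommonSubseqs hz, ?_⟩
    rw [length_dropLast]
    exact_mod_cast Nat.sub_add_cancel hpos
  · rintro ⟨z, hz, rfl⟩
    exact ⟨z ++ [c], concat_mem_constrainedCommonSubseqs c hz, by simp⟩

theorem maxLen_constrainedCommonSubseqs_concat (P A B : List α) (c : α) :
    maxLen (constrainedCommonSubseqs (P ++ [c]) (A ++ [c]) (B ++ [c])) =
      maxLen (constrainedCommonSubseqs P A B) + 1 := by
  rw [maxLen, maxLen, length_image_constrainedCommonSubseqs_concat,
    WithBot.sSup_image_add_const ((constrainedCommonSubseqs_finite P A B).image _)]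

end ConstrainedCommonSubseqs

theorem stmt3 {α : Type*} (A B P : List α) (i j k : ℕ)
    (hi1 : 1 ≤ i) (hi2 : i ≤ A.length) (hj1 : 1 ≤ j) (hj2 : j ≤ B.length)
    (hk1 : 1 ≤ k) (hk2 : k ≤ P.length)
    (hAB : A.get ⟨i - 1, by omega⟩ = B.get ⟨j - 1, by omega⟩)
    (hAP : A.get ⟨i - 1, by omega⟩ = P.get ⟨k - 1, by omega⟩) :
    Cval A B P i j k = Cval A B P (i - 1) (j - 1) (k - 1) + 1 := by
  have hA := A.take_eq_take_sub_one_append hi1 (by omega)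
  have hB := B.take_eq_take_sub_one_append hj1 (by omega)
  have hP := P.take_eq_take_sub_one_append hk1 (by omega)
  rw [← hAB] at hB
  rw [← hAP] at hP
  rw [Cval_eq_maxLen, Cval_eq_maxLen, hA, hB, hP]
  exact maxLen_constrainedCommonSubseqs_concat _ _ _ _
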